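/- arXiv:2209.01804 — 4 statements merged into one kernel-verified Lean document; each statement's English description precedes it below -/
import Mathlib

section
/- Let X be a complex Banach space, θ ∈ ℕ, and K₀, …, K_{θ−1} ∈ L(X). Define the cyclic block operator C ∈ L(X^θ) by C(v₀, v₁, …, v_{θ−1}) := (K_{θ−1} v_{θ−1}, K₀ v₀, K₁ v₁, …, K_{θ−2} v_{θ−2}), and set Ξ := K_{θ−1} K_{θ−2} ⋯ K₀ ∈ L(X). Then σ(Ξ) \ {0} = {λ^θ : λ ∈ σ(C)} \ {0}, and likewise for the point spectra: σ_p(Ξ) \ {0} = {λ^θ : λ ∈ σ_p(C)} \ {0}. -/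
/-- The composition `K_{j−1} ⋯ K₀` of the operators `K₀, …, K_{j−1}`. -/
noncomputable def prodOp {X : Type*} [NormedAddCommGroup X] [NormedSpace ℂ X]
    (K : ℕ → X →L[ℂ] X) : ℕ → (X →L[ℂ] X)
  | 0 => ContinuousLinearMap.id ℂ X
  | (j + 1) => (K j).comp (prodOp K j)

/-- The cyclic block operator `C(v₀,…,v_{θ−1}) = (K_{θ−1}v_{θ−1}, K₀v₀, …,
K_{θ−2}v_{θ−2})` on the `θ`-fold product `X^θ`. -/
noncomputable def cyclicOp {X : Type*} [NormedAddCommGroup X] [NormedSpace ℂ X]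
    (θ : ℕ) (hθ : 0 < θ) (K : ℕ → X →L[ℂ] X) :
    (Fin θ → X) →L[ℂ] (Fin θ → X) :=
  ContinuousLinearMap.pi fun i : Fin θ =>
    (K ((i.val + θ - 1) % θ)).comp
      (ContinuousLinearMap.proj (⟨(i.val + θ - 1) % θ, Nat.mod_lt _ hθ⟩ : Fin θ))

/-!
The cyclic operator `C` is a weighted shift along the cyclic permutation `i ↦ i - 1` of the
blocks, so `C^θ` is block diagonal, its `i`-th block being the rotated product
`K_{i-1} ⋯ K₀ K_{θ-1} ⋯ K_i`. Rotating a product does not change its nonzero spectrum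
(`σ(AB) \ {0} = σ(BA) \ {0}`), so `σ(C^θ) \ {0} = σ(Ξ) \ {0}`, and spectral mapping gives
`σ(C^θ) = σ(C)^θ`. For eigenvalues `λ ≠ 0`, an eigenvector `w` of `C` yields the eigenvector
`w₀` of `Ξ` for `λ^θ`, and conversely an eigenvector `v` of `Ξ` for `λ^θ` yields the
eigenvector `(λ^{-j} K_{j-1} ⋯ K₀ v)_j` of `C`.
-/

open ContinuousLinearMap

section WeightedShift

variable {R ι E : Type*} [Semiring R] [TopologicalSpace E] [AddCommMonoid E] [Module R E]
  (p : ι → ι) (L : ι → E →L[R] E)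

def weightedShift : (ι → E) →L[R] (ι → E) :=
  .pi fun i => L i ∘L .proj (p i)

def shiftCocycle : ℕ → ι → E →L[R] E
  | 0, _ => .id R E
  | n + 1, i => L i ∘L shiftCocycle n (p i)

lemma shiftCocycle_succ' (n : ℕ) (i : ι) :
    shiftCocycle p L (n + 1) i = shiftCocycle p L n i ∘L L (p^[n] i) := by
  induction n generalizing i with
  | zero => rfl
  | succ n ih =>
    change L i ∘L shiftCocycle p L (n + 1) (p i) = (L i ∘L shiftCocycle p L n (p i)) ∘L _
    rw [ih, Function.iterate_succ_apply, comp_assoc]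

lemma weightedShift_pow_apply (n : ℕ) (w : ι → E) (i : ι) :
    (weightedShift p L ^ n) w i = shiftCocycle p L n i (w (p^[n] i)) := by
  induction n generalizing i with
  | zero => rfl
  | succ n ih => rw [pow_succ']; exact congrArg (L i) (ih (p i))

lemma weightedShift_pow_eq_piMap {n : ℕ} (h : p^[n] = id) :
    weightedShift p L ^ n = piMap (shiftCocycle p L n) := by
  ext w i
  rw [weightedShift_pow_apply, h]
  rfl

end WeightedShift

section PiMap

variable (R ι E : Type*) [CommRing R] [TopologicalSpace E] [AddCommGroup E] [Module R E]
  [IsTopologicalAddGroup E] [ContinuousConstSMul R E]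

def piMapAlgHom : (ι → E →L[R] E) →ₐ[R] ((ι → E) →L[R] (ι → E)) where
  toFun := piMap
  map_one' := rfl
  map_mul' _ _ := rfl
  map_zero' := rfl
  map_add' _ _ := rfl
  commutes' _ := rfl

variable {R ι E}

lemma isUnit_piMap_iff {T : ι → E →L[R] E} : IsUnit (piMap T) ↔ IsUnit T := by
  classical
  refine ⟨fun h => ?_, fun h => h.map (piMapAlgHom R ι E)⟩
  obtain ⟨S, hTS, hST⟩ := isUnit_iff_exists.mp h
  refine isUnit_iff_exists.mpr ⟨fun i => proj i ∘L S ∘L single R (fun _ => E) i, ?_, ?_⟩ <;>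
    funext i <;> ext x
  · simpa using congr_fun (DFunLike.congr_fun hTS (Pi.single i x)) i
  · have hdiag : piMap T (Pi.single i x) = Pi.single i (T i x) := by
      ext j; by_cases hj : j = i <;> simp [hj]
    simpa [hdiag] using congr_fun (DFunLike.congr_fun hST (Pi.single i x)) i

lemma spectrum_piMap (T : ι → E →L[R] E) :
    spectrum R (piMap T) = ⋃ i, spectrum R (T i) := by
  rw [← Pi.spectrum_eq]
  ext μ
  simp only [spectrum.mem_iff, ← isUnit_piMap_iff]
  rfl

end PiMap

section ShiftCocycleSpectrum

variable {𝕜 ι E : Type*} [Field 𝕜] [TopologicalSpace E] [AddCommGroup E] [Module 𝕜 E]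
  [IsTopologicalAddGroup E] [ContinuousConstSMul 𝕜 E] {p : ι → ι} (L : ι → E →L[𝕜] E)

/-- The cocycles at `i` and at `p i` are `L i * A` and `A * L i` for the same `A`. -/
lemma spectrum_shiftCocycle_apply_diff {n : ℕ} (h : p^[n] = id) (i : ι) :
    spectrum 𝕜 (shiftCocycle p L n (p i)) \ {0} =
      spectrum 𝕜 (shiftCocycle p L n i) \ {0} := by
  cases n with
  | zero => rfl
  | succ n =>
    have hL : L (p^[n] (p i)) = L i := by rw [← Function.iterate_succ_apply, h, id]
    rw [shiftCocycle_succ', hL]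
    exact spectrum.nonzero_mul_comm _ _

lemma spectrum_shiftCocycle_iterate_diff {n : ℕ} (h : p^[n] = id) (k : ℕ) (i : ι) :
    spectrum 𝕜 (shiftCocycle p L n (p^[k] i)) \ {0} =
      spectrum 𝕜 (shiftCocycle p L n i) \ {0} := by
  induction k with
  | zero => rfl
  | succ k ih => rw [Function.iterate_succ_apply', spectrum_shiftCocycle_apply_diff L h, ih]

end ShiftCocycleSpectrum

section CyclicIndex

variable {θ : ℕ} (hθ : 0 < θ)

def finMod (n : ℕ) : Fin θ := ⟨n % θ, Nat.mod_lt n hθ⟩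

def cycPred (i : Fin θ) : Fin θ := ⟨(i + θ - 1) % θ, Nat.mod_lt _ hθ⟩

lemma finMod_of_lt {n : ℕ} (hn : n < θ) : finMod hθ n = ⟨n, hn⟩ :=
  Fin.ext (Nat.mod_eq_of_lt hn)

lemma finMod_val (i : Fin θ) : finMod hθ i = i := finMod_of_lt hθ i.isLt

lemma finMod_add_self (n : ℕ) : finMod hθ (n + θ) = finMod hθ n :=
  Fin.ext (Nat.add_mod_right n θ)

lemma finMod_self : finMod hθ θ = finMod hθ 0 :=
  Fin.ext (by simp [finMod])

lemma cycPred_finMod_succ (n : ℕ) : cycPred hθ (finMod hθ (n + 1)) = finMod hθ n := by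
  apply Fin.ext
  change ((n + 1) % θ + θ - 1) % θ = n % θ
  rw [Nat.add_sub_assoc hθ, Nat.mod_add_mod, ← Nat.add_sub_assoc hθ, Nat.add_right_comm,
    Nat.add_sub_cancel, Nat.add_mod_right]

lemma iterate_cycPred_finMod (k n : ℕ) :
    (cycPred hθ)^[k] (finMod hθ (n + k)) = finMod hθ n := by
  induction k with
  | zero => rfl
  | succ k ih => rw [Function.iterate_succ_apply, ← Nat.add_assoc, cycPred_finMod_succ, ih]

lemma iterate_cycPred_period : (cycPred hθ)^[θ] = id := by
  funext i
  have h := iterate_cycPred_finMod hθ θ i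
  rwa [finMod_add_self, finMod_val] at h

lemma iterate_cycPred_self (i : Fin θ) : (cycPred hθ)^[i] i = finMod hθ 0 := by
  simpa [finMod_val] using iterate_cycPred_finMod hθ i 0

end CyclicIndex

section CyclicOp

variable {X : Type*} [NormedAddCommGroup X] [NormedSpace ℂ X] {θ : ℕ} (hθ : 0 < θ)
  (K : ℕ → X →L[ℂ] X)

lemma cyclicOp_eq_weightedShift :
    cyclicOp θ hθ K = weightedShift (cycPred hθ) (fun i => K (cycPred hθ i)) := rfl

lemma shiftCocycle_cycPred_finMod {n : ℕ} (hn : n ≤ θ) :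
    shiftCocycle (cycPred hθ) (fun i => K (cycPred hθ i)) n (finMod hθ n) = prodOp K n := by
  induction n with
  | zero => rfl
  | succ n ih =>
    rw [shiftCocycle, cycPred_finMod_succ, ih (by omega), finMod_of_lt hθ (by omega)]
    rfl

lemma spectrum_shiftCocycle_cycPred_diff (i : Fin θ) :
    spectrum ℂ (shiftCocycle (cycPred hθ) (fun i => K (cycPred hθ i)) θ i) \ {0} =
      spectrum ℂ (prodOp K θ) \ {0} := by
  rw [← spectrum_shiftCocycle_iterate_diff _ (iterate_cycPred_period hθ) i,
    iterate_cycPred_self, ← finMod_self, shiftCocycle_cycPred_finMod hθ K le_rfl]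

lemma spectrum_pow_cyclicOp_diff :
    spectrum ℂ (cyclicOp θ hθ K ^ θ) \ {0} = spectrum ℂ (prodOp K θ) \ {0} := by
  rw [cyclicOp_eq_weightedShift, weightedShift_pow_eq_piMap _ _ (iterate_cycPred_period hθ),
    spectrum_piMap, Set.iUnion_sdiff]
  simp_rw [spectrum_shiftCocycle_cycPred_diff]
  have : Nonempty (Fin θ) := ⟨⟨0, hθ⟩⟩
  exact Set.iUnion_const _

lemma cyclicOp_apply_finMod_succ (w : Fin θ → X) {n : ℕ} (hn : n < θ) :
    cyclicOp θ hθ K w (finMod hθ (n + 1)) = K n (w ⟨n, hn⟩) := by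
  change K (cycPred hθ (finMod hθ (n + 1))) (w (cycPred hθ (finMod hθ (n + 1)))) = _
  rw [cycPred_finMod_succ, finMod_of_lt hθ hn]

lemma exists_finMod_succ_eq (i : Fin θ) : ∃ n < θ, finMod hθ (n + 1) = i := by
  rcases i with ⟨_ | m, hm⟩
  · exact ⟨θ - 1, by omega, by rw [Nat.sub_add_cancel hθ, finMod_self]; rfl⟩
  · exact ⟨m, by omega, finMod_of_lt hθ hm⟩

lemma prodOp_apply_eq_of_cyclicOp_apply_eq_smul {w : Fin θ → X} {l : ℂ}
    (hw : cyclicOp θ hθ K w = l • w) {n : ℕ} (hn : n ≤ θ) :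
    prodOp K n (w (finMod hθ 0)) = l ^ n • w (finMod hθ n) := by
  induction n with
  | zero => rw [pow_zero, one_smul]; rfl
  | succ n ih =>
    have hstep := congr_fun hw (finMod hθ (n + 1))
    rw [cyclicOp_apply_finMod_succ hθ K w (by omega)] at hstep
    change K n (prodOp K n _) = _
    rw [ih (by omega), map_smul, finMod_of_lt hθ (by omega : n < θ), hstep, Pi.smul_apply,
      smul_smul, pow_succ]

lemma exists_prodOp_apply_eq_smul {w : Fin θ → X} {l : ℂ} (hl : l ≠ 0) (hw0 : w ≠ 0)
    (hw : cyclicOp θ hθ K w = l • w) : ∃ v : X, v ≠ 0 ∧ prodOp K θ v = l ^ θ • v := by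
  refine ⟨w (finMod hθ 0), fun h0 => hw0 (funext fun i => ?_), ?_⟩
  · have := prodOp_apply_eq_of_cyclicOp_apply_eq_smul hθ K hw i.isLt.le
    rw [h0, map_zero, finMod_val, eq_comm, smul_eq_zero] at this
    exact this.resolve_left (pow_ne_zero _ hl)
  · rw [prodOp_apply_eq_of_cyclicOp_apply_eq_smul hθ K hw le_rfl, finMod_self]

lemma exists_cyclicOp_apply_eq_smul {v : X} {l : ℂ} (hl : l ≠ 0) (hv0 : v ≠ 0)
    (hv : prodOp K θ v = l ^ θ • v) :
    ∃ w : Fin θ → X, w ≠ 0 ∧ cyclicOp θ hθ K w = l • w := by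
  set w : Fin θ → X := fun i => l⁻¹ ^ (i : ℕ) • prodOp K i v
  have hw : ∀ n ≤ θ, w (finMod hθ n) = l⁻¹ ^ n • prodOp K n v := by
    intro n hn
    rcases hn.lt_or_eq with hn | rfl
    · rw [finMod_of_lt hθ hn]
    · rw [finMod_self, hv, smul_smul, inv_pow, inv_mul_cancel₀ (pow_ne_zero _ hl), one_smul]
      simp [w, finMod, prodOp]
  refine ⟨w, fun h => hv0 ?_, funext fun i => ?_⟩
  · simpa [w, prodOp] using congr_fun h ⟨0, hθ⟩
  · obtain ⟨n, hn, rfl⟩ := exists_finMod_succ_eq hθ i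
    rw [cyclicOp_apply_finMod_succ hθ K w hn, Pi.smul_apply, hw _ hn]
    change K n (l⁻¹ ^ n • prodOp K n v) = _
    rw [map_smul, smul_smul, pow_succ, mul_comm, mul_assoc, inv_mul_cancel₀ hl, mul_one]
    rfl

end CyclicOp

theorem spectrum_period_operator_eq_pow_spectrum_cyclic_general
    {X : Type*} [NormedAddCommGroup X] [NormedSpace ℂ X]
    (θ : ℕ) (hθ : 0 < θ) (K : ℕ → X →L[ℂ] X) :
    spectrum ℂ (prodOp K θ) \ {0} =
      {μ : ℂ | ∃ l ∈ spectrum ℂ (cyclicOp θ hθ K), μ = l ^ θ} \ {0} ∧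
    {μ : ℂ | ∃ v : X, v ≠ 0 ∧ prodOp K θ v = μ • v} \ {0} =
      {μ : ℂ | ∃ l : ℂ, (∃ w : Fin θ → X, w ≠ 0 ∧ cyclicOp θ hθ K w = l • w) ∧
        μ = l ^ θ} \ {0} := by
  constructor
  · rw [← spectrum_pow_cyclicOp_diff hθ K, spectrum.map_pow_of_pos _ hθ]
    simp only [Set.image, eq_comm]
  · ext μ
    simp only [Set.mem_sdiff, Set.mem_ofPred_eq, Set.mem_singleton_iff]
    constructor
    · rintro ⟨⟨v, hv0, hv⟩, hμ⟩
      obtain ⟨l, rfl⟩ := IsAlgClosed.exists_pow_nat_eq μ hθ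
      have hl : l ≠ 0 := ne_zero_pow hθ.ne' hμ
      exact ⟨⟨l, exists_cyclicOp_apply_eq_smul hθ K hl hv0 hv, rfl⟩, hμ⟩
    · rintro ⟨⟨l, ⟨w, hw0, hw⟩, rfl⟩, hμ⟩
      exact ⟨exists_prodOp_apply_eq_smul hθ K (ne_zero_pow hθ.ne' hμ) hw0 hw, hμ⟩

/-- Lemma 2.3: for `K₀, …, K_{θ−1} ∈ L(X)`, the spectrum (resp. point spectrum) of
`Ξ = K_{θ−1} ⋯ K₀` away from `0` equals the set of `θ`-th powers of elements of the
spectrum (resp. point spectrum) of the cyclic block operator `C` away from `0`. -/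
theorem spectrum_period_operator_eq_pow_spectrum_cyclic
    {X : Type*} [NormedAddCommGroup X] [NormedSpace ℂ X] [CompleteSpace X]
    (θ : ℕ) (hθ : 0 < θ) (K : ℕ → X →L[ℂ] X) :
    spectrum ℂ (prodOp K θ) \ {0} =
      {μ : ℂ | ∃ l ∈ spectrum ℂ (cyclicOp θ hθ K), μ = l ^ θ} \ {0} ∧
    {μ : ℂ | ∃ v : X, v ≠ 0 ∧ prodOp K θ v = μ • v} \ {0} =
      {μ : ℂ | ∃ l : ℂ, (∃ w : Fin θ → X, w ≠ 0 ∧ cyclicOp θ hθ K w = l • w) ∧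
        μ = l ^ θ} \ {0} :=
  spectrum_period_operator_eq_pow_spectrum_cyclic_general θ hθ K
end

section
/- Let a < b be reals, α ∈ (0,1], d ∈ ℕ, and let u : [a,b] → ℝ^d be α-Hölder continuous with constant C, i.e. |u(x) − u(x̄)| ≤ C|x − x̄|^α for all x, x̄ ∈ [a,b]. Then for every n ∈ ℕ the trapezoidal rule Q_T^n u := (1/2)(Q_LR^n u + Q_RR^n u), where Q_LR^n u = ((b−a)/n) Σ_{j=0}^{n−1} u(a + j(b−a)/n) and Q_RR^n u = ((b−a)/n) Σ_{j=1}^{n} u(a + j(b−a)/n), satisfies |∫_a^b u(y) dy − Q_T^n u| ≤ ((b−a)^{α+1}/n^α) C. -/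
/-!
On a cell `[x, y]` the trapezoid error is `∫ t in x..y, (u t - (u x + u y) / 2)`, and the integrand
is the mean of `u t - u x` and `u t - u y`. On the uniform grid of mesh `h = (b - a) / n`, Hölder
continuity bounds both by `C * h ^ α`, so summing the `n` cells gives `(b - a) * C * h ^ α`.
Hölder continuity with `α > 0` also gives continuity, hence integrability, of `u`.
-/

open Set Filter Topology MeasureTheory intervalIntegral
open scoped Interval

theorem ContinuousOn.of_dist_le_mul_rpow {X Y : Type*} [PseudoMetricSpace X] [PseudoMetricSpace Y]
    {f : X → Y} {s : Set X} {C α : ℝ} (hα : 0 < α)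
    (hf : ∀ x ∈ s, ∀ y ∈ s, dist (f x) (f y) ≤ C * dist x y ^ α) : ContinuousOn f s := by
  intro x hx
  have hlim : Tendsto (fun y => C * dist y x ^ α) (𝓝[s] x) (𝓝 0) := by
    have : Continuous fun y => C * dist y x ^ α := by
      fun_prop (disch := exact hα.le)
    simpa [hα.ne'] using (this.tendsto x).mono_left nhdsWithin_le_nhds
  exact tendsto_iff_dist_tendsto_zero.2 <| squeeze_zero' (.of_forall fun _ => dist_nonneg)
    (eventually_nhdsWithin_of_forall fun y hy => hf y hy x hx) hlim

theorem half_smul_sum_range_add_sum_Icc {V : Type*} [AddCommMonoid V] [Module ℝ V]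
    (f : ℕ → V) (h : ℝ) (n : ℕ) :
    (1 / 2 : ℝ) • (h • ∑ j ∈ Finset.range n, f j + h • ∑ j ∈ Finset.Icc 1 n, f j) =
      ∑ j ∈ Finset.range n, (h / 2) • (f j + f (j + 1)) := by
  rw [← Finset.Ico_add_one_right_eq_Icc, Finset.sum_Ico_eq_sum_range, Nat.add_sub_cancel,
    ← smul_add, smul_smul, ← Finset.sum_add_distrib, Finset.smul_sum]
  simp only [add_comm 1, one_div_mul_eq_div]

section Trapezoid

variable {E : Type*} [NormedAddCommGroup E] [NormedSpace ℝ E] [CompleteSpace E]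

theorem norm_integral_sub_trapezoid_le {u : ℝ → E} {x y M : ℝ} (hxy : x ≤ y)
    (hu : IntervalIntegrable u volume x y)
    (hx : ∀ t ∈ Icc x y, ‖u t - u x‖ ≤ M) (hy : ∀ t ∈ Icc x y, ‖u t - u y‖ ≤ M) :
    ‖(∫ t in x..y, u t) - ((y - x) / 2) • (u x + u y)‖ ≤ M * (y - x) := by
  have hmid : ∀ t ∈ Ι x y, ‖u t - (1 / 2 : ℝ) • (u x + u y)‖ ≤ M := by
    intro t ht
    have ht : t ∈ Icc x y := Ioc_subset_Icc_self (uIoc_of_le hxy ▸ ht)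
    calc ‖u t - (1 / 2 : ℝ) • (u x + u y)‖
        = ‖(1 / 2 : ℝ) • (u t - u x) + (1 / 2 : ℝ) • (u t - u y)‖ := by congr 1; module
      _ ≤ 1 / 2 * ‖u t - u x‖ + 1 / 2 * ‖u t - u y‖ := by
        refine (norm_add_le _ _).trans_eq ?_
        simp only [norm_smul, Real.norm_eq_abs, abs_of_pos (one_half_pos (α := ℝ))]
      _ ≤ M := by linarith [hx t ht, hy t ht]
  have hconst : ((y - x) / 2) • (u x + u y) = ∫ _ in x..y, (1 / 2 : ℝ) • (u x + u y) := by
    rw [intervalIntegral.integral_const, smul_smul, mul_one_div]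
  simpa only [hconst, ← intervalIntegral.integral_sub hu intervalIntegrable_const,
    abs_of_nonneg (sub_nonneg.2 hxy)] using norm_integral_le_of_norm_le_const hmid

theorem norm_integral_sub_sum_trapezoid_le {u : ℝ → E} {g : ℕ → ℝ} {n : ℕ} {M : ℝ}
    (hg : Monotone g) (hu : IntervalIntegrable u volume (g 0) (g n))
    (hleft : ∀ j < n, ∀ t ∈ Icc (g j) (g (j + 1)), ‖u t - u (g j)‖ ≤ M)
    (hright : ∀ j < n, ∀ t ∈ Icc (g j) (g (j + 1)), ‖u t - u (g (j + 1))‖ ≤ M) :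
    ‖(∫ t in g 0..g n, u t) -
        ∑ j ∈ Finset.range n, ((g (j + 1) - g j) / 2) • (u (g j) + u (g (j + 1)))‖ ≤
      M * (g n - g 0) := by
  have hcell : ∀ j < n, IntervalIntegrable u volume (g j) (g (j + 1)) := fun j hj =>
    hu.mono_set <| uIcc_subset_uIcc (mem_uIcc_of_le (hg j.zero_le) (hg hj.le))
      (mem_uIcc_of_le (hg (j + 1).zero_le) (hg hj))
  rw [← sum_integral_adjacent_intervals hcell, ← Finset.sum_sub_distrib,
    ← Finset.sum_range_sub, Finset.mul_sum]
  refine (norm_sum_le _ _).trans (Finset.sum_le_sum fun j hj => ?_)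
  have hj := Finset.mem_range.1 hj
  exact norm_integral_sub_trapezoid_le (hg j.le_succ) (hcell j hj) (hleft j hj) (hright j hj)

theorem norm_integral_sub_sum_uniform_trapezoid_le {u : ℝ → E} {a b M : ℝ} {n : ℕ} (hab : a ≤ b)
    (hn : 0 < n) (hu : IntervalIntegrable u volume a b)
    (hM : ∀ x ∈ Icc a b, ∀ y ∈ Icc a b, |x - y| ≤ (b - a) / n → ‖u x - u y‖ ≤ M) :
    ‖(∫ t in a..b, u t) - ∑ j ∈ Finset.range n, ((b - a) / n / 2) •
        (u (a + (j : ℝ) * (b - a) / n) + u (a + ((j + 1 : ℕ) : ℝ) * (b - a) / n))‖ ≤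
      M * (b - a) := by
  set g : ℕ → ℝ := fun j => a + j * (b - a) / n
  have hg : Monotone g := fun i j hij => by simp only [g]; gcongr
  have hg0 : g 0 = a := by simp [g]
  have hgn : g n = b := by simp [g, hn.ne']
  have hstep : ∀ j, g (j + 1) - g j = (b - a) / n := fun j => by simp only [g]; push_cast; ring
  have hcell : ∀ j < n, ∀ t ∈ Icc (g j) (g (j + 1)),
      t ∈ Icc a b ∧ |t - g j| ≤ (b - a) / n ∧ |t - g (j + 1)| ≤ (b - a) / n := by
    intro j hj t ⟨hjt, htj⟩
    have := hstep j
    refine ⟨⟨hg0 ▸ (hg j.zero_le).trans hjt, htj.trans (hgn ▸ hg hj)⟩, abs_le.2 ⟨?_, ?_⟩,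
      abs_le.2 ⟨?_, ?_⟩⟩ <;> linarith
  have hmem : ∀ j ≤ n, g j ∈ Icc a b := fun j hj => ⟨hg0 ▸ hg j.zero_le, hgn ▸ hg hj⟩
  have := norm_integral_sub_sum_trapezoid_le (M := M) hg (hg0 ▸ hgn ▸ hu)
    (fun j hj t ht => hM t (hcell j hj t ht).1 (g j) (hmem j hj.le) (hcell j hj t ht).2.1)
    (fun j hj t ht => hM t (hcell j hj t ht).1 (g (j + 1)) (hmem (j + 1) hj) (hcell j hj t ht).2.2)
  rw [hg0, hgn] at this
  simpa only [hstep] using this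

end Trapezoid

theorem trapezoidal_rule_error_general
    (a b : ℝ) (hab : a < b) (α : ℝ) (hα0 : 0 < α)
    (d : ℕ) (u : ℝ → EuclideanSpace ℝ (Fin d)) (C : ℝ)
    (hHolder : ∀ x ∈ Set.Icc a b, ∀ y ∈ Set.Icc a b, ‖u x - u y‖ ≤ C * |x - y| ^ α)
    (n : ℕ) (hn : 0 < n) :
    ‖(∫ y in a..b, u y) -
        (1 / 2 : ℝ) •
          (((b - a) / n) • ∑ j ∈ Finset.range n, u (a + (j : ℝ) * (b - a) / n) +
           ((b - a) / n) • ∑ j ∈ Finset.Icc 1 n, u (a + (j : ℝ) * (b - a) / n))‖ ≤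
      (b - a) ^ (α + 1) / (n : ℝ) ^ α * C := by
  have hC : 0 ≤ C := nonneg_of_mul_nonneg_left
    ((norm_nonneg _).trans (hHolder a ⟨le_rfl, hab.le⟩ b ⟨hab.le, le_rfl⟩))
    (Real.rpow_pos_of_pos (abs_pos.2 (sub_ne_zero.2 hab.ne)) α)
  have hu : IntervalIntegrable u volume a b :=
    (ContinuousOn.of_dist_le_mul_rpow hα0 (by simpa only [dist_eq_norm, Real.norm_eq_abs] using
      hHolder)).intervalIntegrable_of_Icc hab.le
  have hmod : ∀ x ∈ Icc a b, ∀ y ∈ Icc a b, |x - y| ≤ (b - a) / n →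
      ‖u x - u y‖ ≤ C * ((b - a) / n) ^ α :=
    fun x hx y hy hxy => (hHolder x hx y hy).trans (by gcongr)
  rw [half_smul_sum_range_add_sum_Icc (fun j : ℕ => u (a + j * (b - a) / n))]
  calc _ ≤ C * ((b - a) / n) ^ α * (b - a) :=
        norm_integral_sub_sum_uniform_trapezoid_le hab.le hn hu hmod
    _ = (b - a) ^ (α + 1) / (n : ℝ) ^ α * C := by
        rw [Real.div_rpow (sub_nonneg.2 hab.le) n.cast_nonneg,
          Real.rpow_add_one (sub_ne_zero.2 hab.ne')]
        field_simp

/-- Quadrature error of the trapezoidal rule `Q_T^n = (Q_LR^n + Q_RR^n)/2` for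
`α`-Hölder continuous functions `u : [a,b] → ℝ^d`:
`|∫_a^b u − Q_T^n u| ≤ ((b−a)^{α+1}/n^α) C`. -/
theorem trapezoidal_rule_error
    (a b : ℝ) (hab : a < b) (α : ℝ) (hα0 : 0 < α) (hα1 : α ≤ 1)
    (d : ℕ) (u : ℝ → EuclideanSpace ℝ (Fin d)) (C : ℝ)
    (hHolder : ∀ x ∈ Set.Icc a b, ∀ y ∈ Set.Icc a b, ‖u x - u y‖ ≤ C * |x - y| ^ α)
    (n : ℕ) (hn : 0 < n) :
    ‖(∫ y in a..b, u y) -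
        (1 / 2 : ℝ) •
          (((b - a) / n) • ∑ j ∈ Finset.range n, u (a + (j : ℝ) * (b - a) / n) +
           ((b - a) / n) • ∑ j ∈ Finset.Icc 1 n, u (a + (j : ℝ) * (b - a) / n))‖ ≤
      (b - a) ^ (α + 1) / (n : ℝ) ^ α * C :=
  trapezoidal_rule_error_general a b hab α hα0 d u C hHolder n hn
end

section
/- Let a < b be reals, α ∈ (0,1], d ∈ ℕ, and let u : [a,b] → ℝ^d be α-Hölder continuous with constant C, i.e. |u(x) − u(x̄)| ≤ C|x − x̄|^α for all x, x̄ ∈ [a,b]. For even n ∈ ℕ define the Simpson rule as the convex combination Q_S^n u := (2/3) Q_M^{n/2} u + (1/3) Q_T^{n/2} u of the midpoint rule Q_M^{n/2} u = (2(b−a)/n) Σ_{j=0}^{n/2−1} u(a + (j + 1/2)·2(b−a)/n) and the trapezoidal rule Q_T^{n/2} u = (2(b−a)/n)(u(a)/2 + Σ_{j=1}^{n/2−1} u(a + j·2(b−a)/n) + u(b)/2). Then |∫_a^b u(y) dy − Q_S^n u| ≤ ((2 + 2^α)/3)·((b−a)^{α+1}/n^α) C. -/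
/-!
On a cell of width `h`, `‖∫ u - h • u p‖ ≤ h · sup ‖u y - u p‖`, so a uniform Riemann sum whose
tags sit at relative position `θ` in their cells errs by at most `(b - a) · ω (max θ (1 - θ) · h)`,
where `ω` is a modulus of continuity of `u`. The midpoint rule is the Riemann sum with `θ = 1/2`
and the trapezoidal rule the average of those with `θ = 0` and `θ = 1`, so Simpson's rule, their
convex combination with weights `2/3` and `1/3`, errs by at most
`(b - a) (2 ω (h/2) + ω h) / 3`. For `ω r = C r^α` and `h = 2 (b - a) / n` this is the bound.
-/

open MeasureTheory Finset Filter Topology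

theorem continuousOn_of_dist_le_mul_rpow {X Y : Type*} [PseudoMetricSpace X]
    [PseudoMetricSpace Y] {u : X → Y} {s : Set X} {C α : ℝ} (hα : 0 < α)
    (hu : ∀ x ∈ s, ∀ y ∈ s, dist (u x) (u y) ≤ C * dist x y ^ α) : ContinuousOn u s := by
  intro p hp
  rw [ContinuousWithinAt, tendsto_iff_dist_tendsto_zero]
  have hlim : Tendsto (fun x => C * dist x p ^ α) (𝓝[s] p) (𝓝 0) := by
    have hcont : Continuous fun x => C * dist x p ^ α := by
      have := Real.continuous_rpow_const hα.le
      fun_prop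
    simpa [Real.zero_rpow hα.ne'] using (hcont.tendsto p).mono_left nhdsWithin_le_nhds
  exact squeeze_zero' (.of_forall fun _ => dist_nonneg)
    (eventually_mem_nhdsWithin.mono fun x hx => hu x hx p hp) hlim

theorem norm_sub_smul_add_smul_le {F : Type*} [SeminormedAddCommGroup F] [NormedSpace ℝ F]
    {s t : ℝ} (hs : 0 ≤ s) (ht : 0 ≤ t) (hst : s + t = 1) (x y z : F) :
    ‖x - (s • y + t • z)‖ ≤ s * ‖x - y‖ + t * ‖x - z‖ := by
  have hsplit : x - (s • y + t • z) = s • (x - y) + t • (x - z) := by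
    calc x - (s • y + t • z) = (s + t) • x - (s • y + t • z) := by rw [hst, one_smul]
      _ = s • (x - y) + t • (x - z) := by module
  rw [hsplit]
  refine (norm_add_le _ _).trans_eq ?_
  rw [norm_smul, norm_smul, Real.norm_of_nonneg hs, Real.norm_of_nonneg ht]

section QuadratureRules

variable {E : Type*} [NormedAddCommGroup E] [NormedSpace ℝ E]

noncomputable def uniformRiemannSum (u : ℝ → E) (a h : ℝ) (m : ℕ) (θ : ℝ) : E :=
  h • ∑ j ∈ range m, u (a + (j + θ) * h)

noncomputable def midpointRule (u : ℝ → E) (a b : ℝ) (m : ℕ) : E :=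
  ((b - a) / m) • ∑ j ∈ range m, u (a + ((j : ℝ) + 1 / 2) * (b - a) / m)

noncomputable def trapezoidalRule (u : ℝ → E) (a b : ℝ) (m : ℕ) : E :=
  ((b - a) / m) •
    ((1 / 2 : ℝ) • u a + ∑ j ∈ Ioo 0 m, u (a + (j : ℝ) * (b - a) / m) + (1 / 2 : ℝ) • u b)

/-- `m` is the number of midpoint cells, i.e. half the number of Simpson subintervals. -/
noncomputable def simpsonRule (u : ℝ → E) (a b : ℝ) (m : ℕ) : E :=
  (2 / 3 : ℝ) • midpointRule u a b m + (1 / 3 : ℝ) • trapezoidalRule u a b m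

theorem midpointRule_eq_uniformRiemannSum (u : ℝ → E) (a b : ℝ) (m : ℕ) :
    midpointRule u a b m = uniformRiemannSum u a ((b - a) / m) m (1 / 2) := by
  simp only [midpointRule, uniformRiemannSum, mul_div_assoc]

theorem trapezoidalRule_eq_uniformRiemannSum {m : ℕ} (hm : 0 < m) (u : ℝ → E) (a b : ℝ) :
    trapezoidalRule u a b m = (1 / 2 : ℝ) •
      (uniformRiemannSum u a ((b - a) / m) m 0 + uniformRiemannSum u a ((b - a) / m) m 1) := by
  obtain ⟨k, rfl⟩ : ∃ k, m = k + 1 := ⟨m - 1, by omega⟩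
  rw [trapezoidalRule, uniformRiemannSum, uniformRiemannSum]
  set h := (b - a) / ↑(k + 1) with hh
  have hnode (j : ℕ) : a + (j : ℝ) * (b - a) / ↑(k + 1) = a + j * h := by
    rw [hh, mul_div_assoc]
  have hb : b = a + ↑(k + 1) * h := by
    rw [hh]; field_simp; ring
  have hinner : ∑ j ∈ Ioo 0 (k + 1), u (a + j * h) = ∑ j ∈ range k, u (a + (j + 1) * h) := by
    rw [show Ioo 0 (k + 1) = Ico 1 (k + 1) by rfl, sum_Ico_eq_sum_range]
    simp [add_comm]
  have hleft : ∑ j ∈ range (k + 1), u (a + (j + 0) * h) =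
      u a + ∑ j ∈ range k, u (a + (j + 1) * h) := by
    simp [sum_range_succ', add_comm]
  have hright : ∑ j ∈ range (k + 1), u (a + (j + 1) * h) =
      ∑ j ∈ range k, u (a + (j + 1) * h) + u b := by
    simp [sum_range_succ, hb]
  simp only [hnode, hinner, hleft, hright]
  module

theorem norm_intervalIntegral_sub_smul_le [CompleteSpace E] {u : ℝ → E} {s t K : ℝ} {w : E}
    (hst : s ≤ t) (hu : IntervalIntegrable u volume s t)
    (hK : ∀ y ∈ Set.Ioc s t, ‖u y - w‖ ≤ K) :
    ‖(∫ y in s..t, u y) - (t - s) • w‖ ≤ K * (t - s) := by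
  rw [← intervalIntegral.integral_const, ← intervalIntegral.integral_sub hu intervalIntegrable_const]
  have := intervalIntegral.norm_integral_le_of_norm_le_const (f := fun y => u y - w)
    (by rwa [Set.uIoc_of_le hst])
  rwa [abs_of_nonneg (sub_nonneg.2 hst)] at this

theorem norm_intervalIntegral_sub_uniformRiemannSum_le [CompleteSpace E] {u : ℝ → E}
    {a b h θ r K : ℝ} {m : ℕ} (hb : a + m * h = b) (hh : 0 ≤ h) (hθ : θ ∈ Set.Icc 0 1)
    (hθr : θ * h ≤ r) (hθr' : (1 - θ) * h ≤ r) (hu : IntervalIntegrable u volume a b)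
    (hK : ∀ x ∈ Set.Icc a b, ∀ y ∈ Set.Icc a b, |x - y| ≤ r → ‖u x - u y‖ ≤ K) :
    ‖(∫ y in a..b, u y) - uniformRiemannSum u a h m θ‖ ≤ K * (b - a) := by
  subst hb
  set x : ℕ → ℝ := fun j => a + j * h
  have hx_succ (j : ℕ) : x (j + 1) = x j + h := by simp only [x]; push_cast; ring
  have hx_mem {j : ℕ} (hj : j ≤ m) : x j ∈ Set.Icc a (a + m * h) := by
    have : (j : ℝ) ≤ m := by exact_mod_cast hj
    constructor <;> simp only [x] <;> nlinarith [(j.cast_nonneg : (0 : ℝ) ≤ j)]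
  have hcell_sub {j : ℕ} (hj : j < m) : Set.Icc (x j) (x (j + 1)) ⊆ Set.Icc a (a + m * h) :=
    Set.Icc_subset_Icc (hx_mem hj.le).1 (hx_mem hj).2
  have hst (j : ℕ) : x j ≤ x (j + 1) := by rw [hx_succ]; linarith
  have hint {j : ℕ} (hj : j < m) : IntervalIntegrable u volume (x j) (x (j + 1)) := by
    refine hu.mono_set ?_
    rw [Set.uIcc_of_le (hst j), Set.uIcc_of_le (le_add_of_nonneg_right (by positivity))]
    exact hcell_sub hj
  have hcell : ∀ j < m, ‖(∫ y in x j..x (j + 1), u y) - h • u (a + (j + θ) * h)‖ ≤ K * h := by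
    intro j hj
    have htag : a + (j + θ) * h ∈ Set.Icc (x j) (x (j + 1)) := by
      rw [hx_succ]; simp only [x]; constructor <;> nlinarith [hθ.1, hθ.2]
    have := norm_intervalIntegral_sub_smul_le (hst j) (hint hj)
      fun y hy => hK y (hcell_sub hj (Set.Ioc_subset_Icc_self hy)) _ (hcell_sub hj htag) (by
        rw [hx_succ] at hy htag
        simp only [x, Set.mem_Ioc, Set.mem_Icc] at hy htag
        rw [abs_le]; constructor <;> linarith)
    rwa [hx_succ, add_sub_cancel_left, ← hx_succ] at this
  have hsplit : (∫ y in a..a + m * h, u y) = ∑ j ∈ range m, ∫ y in x j..x (j + 1), u y := by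
    rw [intervalIntegral.sum_integral_adjacent_intervals (a := x) fun _ hk => hint hk]
    simp [x]
  calc ‖(∫ y in a..a + m * h, u y) - uniformRiemannSum u a h m θ‖
      = ‖∑ j ∈ range m, ((∫ y in x j..x (j + 1), u y) - h • u (a + (j + θ) * h))‖ := by
        rw [hsplit, uniformRiemannSum, smul_sum, sum_sub_distrib]
    _ ≤ ∑ j ∈ range m, ‖(∫ y in x j..x (j + 1), u y) - h • u (a + (j + θ) * h)‖ :=
        norm_sum_le _ _
    _ ≤ ∑ _j ∈ range m, K * h := sum_le_sum fun j hj => hcell j (mem_range.1 hj)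
    _ = K * (a + m * h - a) := by simp only [sum_const, card_range, nsmul_eq_mul]; ring

theorem add_natCast_mul_div_natCast {m : ℕ} (hm : 0 < m) (a b : ℝ) :
    a + m * ((b - a) / m) = b := by
  field_simp; ring

theorem norm_intervalIntegral_sub_midpointRule_le [CompleteSpace E] {u : ℝ → E} {a b K : ℝ}
    {m : ℕ} (hab : a ≤ b) (hm : 0 < m) (hu : IntervalIntegrable u volume a b)
    (hK : ∀ x ∈ Set.Icc a b, ∀ y ∈ Set.Icc a b, |x - y| ≤ (b - a) / (2 * m) → ‖u x - u y‖ ≤ K) :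
    ‖(∫ y in a..b, u y) - midpointRule u a b m‖ ≤ K * (b - a) := by
  have hb := add_natCast_mul_div_natCast hm a b
  have hr : 1 / 2 * ((b - a) / m) = (b - a) / (2 * m) := by field_simp
  rw [midpointRule_eq_uniformRiemannSum]
  exact norm_intervalIntegral_sub_uniformRiemannSum_le hb
    (div_nonneg (sub_nonneg.2 hab) m.cast_nonneg) (by norm_num) hr.le (by linarith) hu hK

theorem norm_intervalIntegral_sub_trapezoidalRule_le [CompleteSpace E] {u : ℝ → E} {a b K : ℝ}
    {m : ℕ} (hab : a ≤ b) (hm : 0 < m) (hu : IntervalIntegrable u volume a b)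
    (hK : ∀ x ∈ Set.Icc a b, ∀ y ∈ Set.Icc a b, |x - y| ≤ (b - a) / m → ‖u x - u y‖ ≤ K) :
    ‖(∫ y in a..b, u y) - trapezoidalRule u a b m‖ ≤ K * (b - a) := by
  have hb := add_natCast_mul_div_natCast hm a b
  have hh : 0 ≤ (b - a) / m := div_nonneg (sub_nonneg.2 hab) m.cast_nonneg
  have hleft := norm_intervalIntegral_sub_uniformRiemannSum_le (θ := 0) hb hh (by norm_num)
    (by simp [hh]) (by simp) hu hK
  have hright := norm_intervalIntegral_sub_uniformRiemannSum_le (θ := 1) hb hh (by norm_num)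
    (by simp) (by simp [hh]) hu hK
  rw [trapezoidalRule_eq_uniformRiemannSum hm, smul_add]
  calc _ ≤ 1 / 2 * ‖(∫ y in a..b, u y) - uniformRiemannSum u a ((b - a) / m) m 0‖ +
        1 / 2 * ‖(∫ y in a..b, u y) - uniformRiemannSum u a ((b - a) / m) m 1‖ :=
      norm_sub_smul_add_smul_le (by norm_num) (by norm_num) (by norm_num) _ _ _
    _ ≤ 1 / 2 * (K * (b - a)) + 1 / 2 * (K * (b - a)) := by gcongr
    _ = K * (b - a) := by ring

theorem norm_intervalIntegral_sub_simpsonRule_le [CompleteSpace E] {u : ℝ → E} {a b : ℝ}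
    {ω : ℝ → ℝ} {m : ℕ} (hab : a ≤ b) (hm : 0 < m) (hu : IntervalIntegrable u volume a b)
    (hω : ∀ r, ∀ x ∈ Set.Icc a b, ∀ y ∈ Set.Icc a b, |x - y| ≤ r → ‖u x - u y‖ ≤ ω r) :
    ‖(∫ y in a..b, u y) - simpsonRule u a b m‖ ≤
      (2 / 3 * ω ((b - a) / (2 * m)) + 1 / 3 * ω ((b - a) / m)) * (b - a) :=
  calc _ ≤ 2 / 3 * ‖(∫ y in a..b, u y) - midpointRule u a b m‖ +
        1 / 3 * ‖(∫ y in a..b, u y) - trapezoidalRule u a b m‖ :=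
      norm_sub_smul_add_smul_le (by norm_num) (by norm_num) (by norm_num) _ _ _
    _ ≤ 2 / 3 * (ω ((b - a) / (2 * m)) * (b - a)) + 1 / 3 * (ω ((b - a) / m) * (b - a)) := by
      gcongr
      · exact norm_intervalIntegral_sub_midpointRule_le hab hm hu (hω _)
      · exact norm_intervalIntegral_sub_trapezoidalRule_le hab hm hu (hω _)
    _ = _ := by ring

end QuadratureRules

theorem simpson_rule_error_general
    (a b : ℝ) (hab : a < b) (α : ℝ) (hα0 : 0 < α)
    (d : ℕ) (u : ℝ → EuclideanSpace ℝ (Fin d)) (C : ℝ)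
    (hHolder : ∀ x ∈ Set.Icc a b, ∀ y ∈ Set.Icc a b, ‖u x - u y‖ ≤ C * |x - y| ^ α)
    (n m : ℕ) (hm : 0 < m) (hnm : n = 2 * m) :
    ‖(∫ y in a..b, u y) -
        ((2 / 3 : ℝ) •
          (((b - a) / m) •
            ∑ j ∈ Finset.range m, u (a + ((j : ℝ) + 1 / 2) * (b - a) / m)) +
         (1 / 3 : ℝ) •
          (((b - a) / m) •
            ((1 / 2 : ℝ) • u a +
             ∑ j ∈ Finset.Ioo 0 m, u (a + (j : ℝ) * (b - a) / m) +
             (1 / 2 : ℝ) • u b)))‖ ≤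
      (2 + 2 ^ α) / 3 * ((b - a) ^ (α + 1) / (n : ℝ) ^ α) * C := by
  have hC : 0 ≤ C := nonneg_of_mul_nonneg_left
    ((norm_nonneg _).trans (hHolder a ⟨le_rfl, hab.le⟩ b ⟨hab.le, le_rfl⟩))
    (Real.rpow_pos_of_pos (abs_pos.2 (sub_ne_zero.2 hab.ne)) α)
  have hcont : ContinuousOn u (Set.Icc a b) := continuousOn_of_dist_le_mul_rpow hα0
    (by simpa only [dist_eq_norm, Real.norm_eq_abs] using hHolder)
  have hu : IntervalIntegrable u volume a b := hcont.intervalIntegrable_of_Icc hab.le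
  have hmod (r x : ℝ) (hx : x ∈ Set.Icc a b) (y : ℝ) (hy : y ∈ Set.Icc a b)
      (hxy : |x - y| ≤ r) : ‖u x - u y‖ ≤ C * r ^ α :=
    (hHolder x hx y hy).trans (by gcongr)
  have hn : (n : ℝ) = 2 * m := by rw [hnm]; push_cast; ring
  change ‖(∫ y in a..b, u y) - simpsonRule u a b m‖ ≤ _
  calc _ ≤ (2 / 3 * (C * ((b - a) / (2 * m)) ^ α) + 1 / 3 * (C * ((b - a) / m) ^ α)) * (b - a) :=
      norm_intervalIntegral_sub_simpsonRule_le hab.le hm hu hmod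
    _ = _ := by
      have hba : 0 < b - a := sub_pos.2 hab
      have hhalf : (b - a) / m = 2 * ((b - a) / n) := by rw [hn]; field_simp
      have hpow : (b - a) ^ (α + 1) / (n : ℝ) ^ α = ((b - a) / n) ^ α * (b - a) := by
        rw [Real.div_rpow hba.le n.cast_nonneg, Real.rpow_add_one hba.ne']; ring
      rw [← hn, hhalf, Real.mul_rpow zero_le_two (div_nonneg hba.le n.cast_nonneg), hpow]
      ring

/-- Quadrature error of the Simpson rule, represented for even `n = 2m` as the convex
combination `Q_S^n = (2/3) Q_M^{n/2} + (1/3) Q_T^{n/2}` of the midpoint and trapezoidal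
rules with `m = n/2` subintervals, for `α`-Hölder continuous `u : [a,b] → ℝ^d`:
`|∫_a^b u − Q_S^n u| ≤ ((2 + 2^α)/3)((b−a)^{α+1}/n^α) C`. -/
theorem simpson_rule_error
    (a b : ℝ) (hab : a < b) (α : ℝ) (hα0 : 0 < α) (hα1 : α ≤ 1)
    (d : ℕ) (u : ℝ → EuclideanSpace ℝ (Fin d)) (C : ℝ)
    (hHolder : ∀ x ∈ Set.Icc a b, ∀ y ∈ Set.Icc a b, ‖u x - u y‖ ≤ C * |x - y| ^ α)
    (n m : ℕ) (hm : 0 < m) (hnm : n = 2 * m) :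
    ‖(∫ y in a..b, u y) -
        ((2 / 3 : ℝ) •
          (((b - a) / m) •
            ∑ j ∈ Finset.range m, u (a + ((j : ℝ) + 1 / 2) * (b - a) / m)) +
         (1 / 3 : ℝ) •
          (((b - a) / m) •
            ((1 / 2 : ℝ) • u a +
             ∑ j ∈ Finset.Ioo 0 m, u (a + (j : ℝ) * (b - a) / m) +
             (1 / 2 : ℝ) • u b)))‖ ≤
      (2 + 2 ^ α) / 3 * ((b - a) ^ (α + 1) / (n : ℝ) ^ α) * C :=
  simpson_rule_error_general a b hab α hα0 d u C hHolder n m hm hnm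
end

section
/- Let Ω ⊂ ℝ^κ be a nonempty compact set, Z ⊆ ℝ^d, α ∈ (0,1], r > 0, c₀ ≥ 0, n ∈ ℕ, and let Q be a quadrature/cubature rule Q v := Σ_{η ∈ Ω_n} w_η v(η) with a finite grid Ω_n ⊂ Ω and weights w_η ≥ 0, satisfying the consistency estimate |∫_Ω v(y) dy − Q v| ≤ (c₀/n^α) max{sup_{y∈Ω}|v(y)|, [v]_α} for every α-Hölder continuous v : Ω → ℝ^d, where [v]_α is the smallest Hölder constant of v. Let f : Ω × Ω × Z → ℝ^d be continuous with |f(x, y, z) − f(x, ȳ, z̄)| ≤ l_r⁰ max{|y − ȳ|^α, |z − z̄|} for all x, y, ȳ ∈ Ω and z, z̄ ∈ Z with |z|, |z̄| ≤ r, for some l_r⁰ ≥ 0. Then for every α-Hölder continuous u : Ω → Z with sup_{y∈Ω}|u(y)| ≤ r one has, for every x ∈ Ω, |∫_Ω f(x, y, u(y)) dy − Σ_{η ∈ Ω_n} w_η f(x, η, u(η))| ≤ (c₀/n^α) max{ sup_{ξ,y ∈ Ω} |f(ξ, y, u(y))|, l_r⁰ max{1, [u]_α} }. -/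
open MeasureTheory
open scoped BigOperators

/-! The quadrature estimate is applied to `v y = f x y (u y)`: the joint Hölder–Lipschitz
bound on `f`, together with `‖u y - u y'‖ ≤ [u]_α ‖y - y'‖^α`, makes `v` an `α`-Hölder function
with constant `l * max 1 [u]_α`, while `sup |v|` is bounded by the supremum of `f` along `u`. -/

lemma max_le_max_one_mul_of_le_mul {t a C : ℝ} (ht : 0 ≤ t) (ha : a ≤ C * t) :
    max t a ≤ max 1 C * t :=
  max_le (le_mul_of_one_le_left ht (le_max_left 1 C))
    (ha.trans (mul_le_mul_of_nonneg_right (le_max_right 1 C) ht))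

lemma norm_sub_le_of_holder_comp {X E F : Type*} [SeminormedAddCommGroup X]
    [SeminormedAddCommGroup E] [SeminormedAddCommGroup F]
    {s : Set X} {T : Set E} {g : X → E → F} {u : X → E} {α l C : ℝ} (hl : 0 ≤ l)
    (hg : ∀ y ∈ s, ∀ y' ∈ s, ∀ z ∈ T, ∀ z' ∈ T,
      ‖g y z - g y' z'‖ ≤ l * max (‖y - y'‖ ^ α) ‖z - z'‖)
    (huT : Set.MapsTo u s T) (hu : ∀ y ∈ s, ∀ y' ∈ s, ‖u y - u y'‖ ≤ C * ‖y - y'‖ ^ α)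
    {y y' : X} (hy : y ∈ s) (hy' : y' ∈ s) :
    ‖g y (u y) - g y' (u y')‖ ≤ l * max 1 C * ‖y - y'‖ ^ α := by
  have hmax : max (‖y - y'‖ ^ α) ‖u y - u y'‖ ≤ max 1 C * ‖y - y'‖ ^ α :=
    max_le_max_one_mul_of_le_mul (Real.rpow_nonneg (norm_nonneg _) α) (hu y hy y' hy')
  calc ‖g y (u y) - g y' (u y')‖ ≤ l * max (‖y - y'‖ ^ α) ‖u y - u y'‖ :=
        hg y hy y' hy' (u y) (huT hy) (u y') (huT hy')
    _ ≤ l * (max 1 C * ‖y - y'‖ ^ α) := mul_le_mul_of_nonneg_left hmax hl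
    _ = l * max 1 C * ‖y - y'‖ ^ α := (mul_assoc _ _ _).symm

theorem nystrom_consistency_urysohn_general
    (κ d : ℕ)
    (Ω : Set (EuclideanSpace ℝ (Fin κ)))
    (Z : Set (EuclideanSpace ℝ (Fin d)))
    (α : ℝ) (r : ℝ)
    (c₀ : ℝ) (n : ℕ)
    (grid : Finset (EuclideanSpace ℝ (Fin κ)))
    (w : EuclideanSpace ℝ (Fin κ) → ℝ)
    -- consistency order α of the quadrature/cubature rule
    (hQ : ∀ (v : EuclideanSpace ℝ (Fin κ) → EuclideanSpace ℝ (Fin d)) (Cv Mv : ℝ),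
      (∀ x ∈ Ω, ∀ x' ∈ Ω, ‖v x - v x'‖ ≤ Cv * ‖x - x'‖ ^ α) →
      (∀ x ∈ Ω, ‖v x‖ ≤ Mv) →
      ‖(∫ y in Ω, v y) - ∑ η ∈ grid, w η • v η‖ ≤ c₀ / (n : ℝ) ^ α * max Mv Cv)
    (f : EuclideanSpace ℝ (Fin κ) → EuclideanSpace ℝ (Fin κ) →
      EuclideanSpace ℝ (Fin d) → EuclideanSpace ℝ (Fin d))
    (l : ℝ) (hl : 0 ≤ l)
    -- assumption (3.9)
    (hfl : ∀ x ∈ Ω, ∀ y ∈ Ω, ∀ y' ∈ Ω, ∀ z ∈ Z, ∀ z' ∈ Z, ‖z‖ ≤ r → ‖z'‖ ≤ r →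
      ‖f x y z - f x y' z'‖ ≤ l * max (‖y - y'‖ ^ α) ‖z - z'‖) :
    ∀ u : EuclideanSpace ℝ (Fin κ) → EuclideanSpace ℝ (Fin d),
      (∀ y ∈ Ω, u y ∈ Z) → (∀ y ∈ Ω, ‖u y‖ ≤ r) →
      ∀ Cu : ℝ, (∀ x ∈ Ω, ∀ x' ∈ Ω, ‖u x - u x'‖ ≤ Cu * ‖x - x'‖ ^ α) →
      ∀ Mf : ℝ, (∀ ξ ∈ Ω, ∀ y ∈ Ω, ‖f ξ y (u y)‖ ≤ Mf) →
      ∀ x ∈ Ω,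
        ‖(∫ y in Ω, f x y (u y)) - ∑ η ∈ grid, w η • f x η (u η)‖ ≤
          c₀ / (n : ℝ) ^ α * max Mf (l * max 1 Cu) := by
  intro u huZ hur Cu hCu Mf hMf x hx
  have huT : Set.MapsTo u Ω (Z ∩ Metric.closedBall 0 r) := fun y hy =>
    ⟨huZ y hy, mem_closedBall_zero_iff.2 (hur y hy)⟩
  have hfT : ∀ y ∈ Ω, ∀ y' ∈ Ω, ∀ z ∈ Z ∩ Metric.closedBall 0 r,
      ∀ z' ∈ Z ∩ Metric.closedBall 0 r,
      ‖f x y z - f x y' z'‖ ≤ l * max (‖y - y'‖ ^ α) ‖z - z'‖ :=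
    fun y hy y' hy' z hz z' hz' => hfl x hx y hy y' hy' z hz.1 z' hz'.1
      (mem_closedBall_zero_iff.1 hz.2) (mem_closedBall_zero_iff.1 hz'.2)
  exact hQ (fun y => f x y (u y)) (l * max 1 Cu) Mf
    (fun y hy y' hy' => norm_sub_le_of_holder_comp hl hfT huT hCu hy hy')
    (fun y hy => hMf x hx y hy)

/-- Proposition 3.3 (pointwise version): consistency of the Nyström discretization of a
Urysohn operator. If the rule `Q v = Σ_{η∈Ω_n} w_η v(η)` has consistency order `α`,
i.e. `|∫_Ω v − Qv| ≤ (c₀/n^α) max{sup_Ω |v|, [v]_α}` for `α`-Hölder `v`, and the kernel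
satisfies `|f(x,y,z) − f(x,ȳ,z̄)| ≤ l_r⁰ max{|y−ȳ|^α, |z−z̄|}`, then for every
`α`-Hölder `u : Ω → Z` with `sup_Ω |u| ≤ r` and every `x ∈ Ω`,
`|∫_Ω f(x,y,u(y)) dy − Σ_η w_η f(x,η,u(η))| ≤ (c₀/n^α) max{sup_{ξ,y}|f(ξ,y,u(y))|,
l_r⁰ max{1,[u]_α}}`. -/
theorem nystrom_consistency_urysohn
    (κ d : ℕ)
    (Ω : Set (EuclideanSpace ℝ (Fin κ))) (hΩc : IsCompact Ω) (hΩne : Ω.Nonempty)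
    (Z : Set (EuclideanSpace ℝ (Fin d)))
    (α : ℝ) (hα0 : 0 < α) (hα1 : α ≤ 1) (r : ℝ) (hr : 0 < r)
    (c₀ : ℝ) (hc₀ : 0 ≤ c₀) (n : ℕ) (hn : 0 < n)
    (grid : Finset (EuclideanSpace ℝ (Fin κ))) (hgrid : ↑grid ⊆ Ω)
    (w : EuclideanSpace ℝ (Fin κ) → ℝ) (hw : ∀ η ∈ grid, 0 ≤ w η)
    -- consistency order α of the quadrature/cubature rule
    (hQ : ∀ (v : EuclideanSpace ℝ (Fin κ) → EuclideanSpace ℝ (Fin d)) (Cv Mv : ℝ),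
      (∀ x ∈ Ω, ∀ x' ∈ Ω, ‖v x - v x'‖ ≤ Cv * ‖x - x'‖ ^ α) →
      (∀ x ∈ Ω, ‖v x‖ ≤ Mv) →
      ‖(∫ y in Ω, v y) - ∑ η ∈ grid, w η • v η‖ ≤ c₀ / (n : ℝ) ^ α * max Mv Cv)
    (f : EuclideanSpace ℝ (Fin κ) → EuclideanSpace ℝ (Fin κ) →
      EuclideanSpace ℝ (Fin d) → EuclideanSpace ℝ (Fin d))
    (hfc : ContinuousOn
      (fun p : EuclideanSpace ℝ (Fin κ) × EuclideanSpace ℝ (Fin κ) ×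
        EuclideanSpace ℝ (Fin d) => f p.1 p.2.1 p.2.2) (Ω ×ˢ Ω ×ˢ Z))
    (l : ℝ) (hl : 0 ≤ l)
    -- assumption (3.9)
    (hfl : ∀ x ∈ Ω, ∀ y ∈ Ω, ∀ y' ∈ Ω, ∀ z ∈ Z, ∀ z' ∈ Z, ‖z‖ ≤ r → ‖z'‖ ≤ r →
      ‖f x y z - f x y' z'‖ ≤ l * max (‖y - y'‖ ^ α) ‖z - z'‖) :
    ∀ u : EuclideanSpace ℝ (Fin κ) → EuclideanSpace ℝ (Fin d),
      (∀ y ∈ Ω, u y ∈ Z) → (∀ y ∈ Ω, ‖u y‖ ≤ r) →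
      ∀ Cu : ℝ, (∀ x ∈ Ω, ∀ x' ∈ Ω, ‖u x - u x'‖ ≤ Cu * ‖x - x'‖ ^ α) →
      ∀ Mf : ℝ, (∀ ξ ∈ Ω, ∀ y ∈ Ω, ‖f ξ y (u y)‖ ≤ Mf) →
      ∀ x ∈ Ω,
        ‖(∫ y in Ω, f x y (u y)) - ∑ η ∈ grid, w η • f x η (u η)‖ ≤
          c₀ / (n : ℝ) ^ α * max Mf (l * max 1 Cu) :=
  nystrom_consistency_urysohn_general κ d Ω Z α r c₀ n grid w hQ f l hl hfl
end
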